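/- (Consistency of the combined noisy semi-supervised risk.) In the setting of the noisy semi-supervised case (p_P̃ = (1−η_P)·p_P + η_P·p_N, p_Ñ = η_N·p_P + (1−η_N)·p_N, p_U = π_P·p_P + π_N·p_N with π_P + π_N = 1), let γ ∈ [0,1] and define the combined risk R_P̃ÑU(f) = γ·R(f; p_P̃, p_Ñ) + (1−γ)·(R(f; p_P̃, p_U) + R(f; p_U, p_Ñ) − 1/2). Assume f : X → ℝ is measurable and the pushforward distributions of f under p_P and under p_N are atomless. Then R_P̃ÑU(f) = ã·R_PN(f) + (1 − ã)/2 with ã = 1 − η_P − η_N; in particular R_P̃ÑU is an affine transformation of the true AUC risk with slope independent of γ. -/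

import Mathlib

open MeasureTheory

/-- The AUC risk of score function `f` under the 0–1 loss, with positive distribution `μ`
and negative distribution `ν`: `R(f; μ, ν) = ∫∫ 𝟙[f(x) − f(x') < 0] dμ(x) dν(x')`. -/
noncomputable def AUCRisk {X : Type*} [MeasurableSpace X] (f : X → ℝ)
    (μ ν : Measure X) : ℝ :=
  ∫ x, ∫ x', (if f x - f x' < 0 then (1 : ℝ) else 0) ∂ν ∂μ

/-!
Under the product measure, `R(f; μ, ν)` is the `μ ⊗ ν`-measure of `{(x, x') | f x < f x'}`, so
it is additive and positively homogeneous in each measure. Expanding `p_P̃`, `p_Ñ`, `p_U` as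
mixtures of `p_P` and `p_N` reduces every term to `R(f; a, b)` with `a, b ∈ {p_P, p_N}`. When
the law of `f` under `ν` is atomless the diagonal `{f x = f x'}` is `μ ⊗ ν`-null, so
`R(f; μ, ν) + R(f; ν, μ) = 1`; hence `R(f; p_N, p_P) = 1 - R_PN(f)` and
`R(f; p_P, p_P) = R(f; p_N, p_N) = 1/2`, after which `γ` and `π_P` cancel.
-/

open Set

instance MeasureTheory.Measure.isFiniteMeasure_ofReal_smul {X : Type*} [MeasurableSpace X]
    (μ : Measure X) [IsFiniteMeasure μ] (a : ℝ) : IsFiniteMeasure (ENNReal.ofReal a • μ) :=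
  μ.smul_finite ENNReal.ofReal_ne_top

namespace AUCRisk

variable {X : Type*} [MeasurableSpace X] {f : X → ℝ}

theorem smul_left (c : ENNReal) (μ ν : Measure X) :
    AUCRisk f (c • μ) ν = c.toReal * AUCRisk f μ ν :=
  integral_smul_measure _ c

theorem smul_right (c : ENNReal) (μ ν : Measure X) :
    AUCRisk f μ (c • ν) = c.toReal * AUCRisk f μ ν := by
  simp only [AUCRisk, integral_smul_measure, smul_eq_mul, integral_const_mul]

theorem eq_measureReal_prod (hf : Measurable f) (μ ν : Measure X) [IsFiniteMeasure μ]
    [IsFiniteMeasure ν] :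
    AUCRisk f μ ν = (μ.prod ν).real {p | f p.1 < f p.2} := by
  have hs : MeasurableSet {p : X × X | f p.1 < f p.2} :=
    measurableSet_lt (hf.comp measurable_fst) (hf.comp measurable_snd)
  rw [← integral_indicator_one hs, integral_prod _ ((integrable_const 1).indicator hs)]
  simp [AUCRisk, Set.indicator, sub_neg]

theorem add_left (hf : Measurable f) (μ₁ μ₂ ν : Measure X) [IsFiniteMeasure μ₁]
    [IsFiniteMeasure μ₂] [IsFiniteMeasure ν] :
    AUCRisk f (μ₁ + μ₂) ν = AUCRisk f μ₁ ν + AUCRisk f μ₂ ν := by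
  rw [eq_measureReal_prod hf, eq_measureReal_prod hf, eq_measureReal_prod hf, Measure.add_prod,
    measureReal_add_apply]

theorem add_right (hf : Measurable f) (μ ν₁ ν₂ : Measure X) [IsFiniteMeasure μ]
    [IsFiniteMeasure ν₁] [IsFiniteMeasure ν₂] :
    AUCRisk f μ (ν₁ + ν₂) = AUCRisk f μ ν₁ + AUCRisk f μ ν₂ := by
  rw [eq_measureReal_prod hf, eq_measureReal_prod hf, eq_measureReal_prod hf, Measure.prod_add,
    measureReal_add_apply]

theorem add_swap (hf : Measurable f) (μ ν : Measure X) [IsFiniteMeasure μ]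
    [IsFiniteMeasure ν] (hν : ∀ t : ℝ, ν {x | f x = t} = 0) :
    AUCRisk f μ ν + AUCRisk f ν μ = μ.real univ * ν.real univ := by
  have hs : MeasurableSet {p : X × X | f p.1 < f p.2} :=
    measurableSet_lt (hf.comp measurable_fst) (hf.comp measurable_snd)
  have hdiag : ∀ᵐ p ∂μ.prod ν, f p.1 ≠ f p.2 := by
    refine (Measure.ae_prod_iff_ae_ae (measurableSet_eq_fun (hf.comp measurable_fst)
      (hf.comp measurable_snd)).compl).2 (Filter.Eventually.of_forall fun x => ?_)
    simpa [ae_iff, eq_comm] using hν (f x)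
  have hswap :
      {p : X × X | f p.2 < f p.1} =ᵐ[μ.prod ν] ({p | f p.1 < f p.2}ᶜ : Set (X × X)) := by
    filter_upwards [hdiag] with p hp
    exact propext ⟨fun h => lt_asymm h, fun h => lt_of_le_of_ne (not_lt.1 h) hp.symm⟩
  have hνμ : AUCRisk f ν μ = (μ.prod ν).real {p | f p.2 < f p.1} := by
    rw [eq_measureReal_prod hf, ← Measure.prod_swap, map_measureReal_apply measurable_swap hs]
    rfl
  rw [hνμ, eq_measureReal_prod hf, measureReal_congr hswap, measureReal_add_measureReal_compl hs,
    ← Set.univ_prod_univ, measureReal_def, Measure.prod_prod, ENNReal.toReal_mul]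
  rfl

theorem add_swap_of_isProbabilityMeasure (hf : Measurable f) (μ ν : Measure X)
    [IsProbabilityMeasure μ] [IsProbabilityMeasure ν] (hν : ∀ t : ℝ, ν {x | f x = t} = 0) :
    AUCRisk f μ ν + AUCRisk f ν μ = 1 := by
  simpa using add_swap hf μ ν hν

theorem self_eq_half (hf : Measurable f) (μ : Measure X) [IsProbabilityMeasure μ]
    (hμ : ∀ t : ℝ, μ {x | f x = t} = 0) : AUCRisk f μ μ = 1 / 2 := by
  linarith [add_swap_of_isProbabilityMeasure hf μ μ hμ]

theorem mix_left (hf : Measurable f) (μ₁ μ₂ ν : Measure X) [IsFiniteMeasure μ₁]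
    [IsFiniteMeasure μ₂] [IsFiniteMeasure ν] {a b : ℝ} (ha : 0 ≤ a) (hb : 0 ≤ b) :
    AUCRisk f (ENNReal.ofReal a • μ₁ + ENNReal.ofReal b • μ₂) ν
      = a * AUCRisk f μ₁ ν + b * AUCRisk f μ₂ ν := by
  rw [add_left hf, smul_left, smul_left, ENNReal.toReal_ofReal ha, ENNReal.toReal_ofReal hb]

theorem mix_right (hf : Measurable f) (μ ν₁ ν₂ : Measure X) [IsFiniteMeasure μ]
    [IsFiniteMeasure ν₁] [IsFiniteMeasure ν₂] {a b : ℝ} (ha : 0 ≤ a) (hb : 0 ≤ b) :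
    AUCRisk f μ (ENNReal.ofReal a • ν₁ + ENNReal.ofReal b • ν₂)
      = a * AUCRisk f μ ν₁ + b * AUCRisk f μ ν₂ := by
  rw [add_right hf, smul_right, smul_right, ENNReal.toReal_ofReal ha, ENNReal.toReal_ofReal hb]

end AUCRisk

theorem combined_noisy_semi_supervised_auc_risk_general {X : Type*} [MeasurableSpace X]
    (pP pN : Measure X) [IsProbabilityMeasure pP] [IsProbabilityMeasure pN]
    (πP πN : ℝ) (hπP : πP ∈ Set.Icc (0 : ℝ) 1) (hπN : πN ∈ Set.Icc (0 : ℝ) 1)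
    (hsum : πP + πN = 1)
    (ηP ηN : ℝ) (hηP : ηP ∈ Set.Icc (0 : ℝ) 1) (hηN : ηN ∈ Set.Icc (0 : ℝ) 1)
    (γ : ℝ)
    (f : X → ℝ) (hf : Measurable f)
    (hP : ∀ t : ℝ, pP {x | f x = t} = 0)
    (hN : ∀ t : ℝ, pN {x | f x = t} = 0)
    (pPt pNt pU : Measure X)
    (hpPt : pPt = ENNReal.ofReal (1 - ηP) • pP + ENNReal.ofReal ηP • pN)
    (hpNt : pNt = ENNReal.ofReal ηN • pP + ENNReal.ofReal (1 - ηN) • pN)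
    (hpU : pU = ENNReal.ofReal πP • pP + ENNReal.ofReal πN • pN) :
    γ * AUCRisk f pPt pNt
      + (1 - γ) * (AUCRisk f pPt pU + AUCRisk f pU pNt - 1 / 2)
      = (1 - ηP - ηN) * AUCRisk f pP pN + (1 - (1 - ηP - ηN)) / 2 := by
  have h1ηP : 0 ≤ 1 - ηP := sub_nonneg.2 hηP.2
  have h1ηN : 0 ≤ 1 - ηN := sub_nonneg.2 hηN.2
  subst hpPt hpNt hpU
  simp only [AUCRisk.mix_left hf _ _ _ h1ηP hηP.1, AUCRisk.mix_left hf _ _ _ hπP.1 hπN.1,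
    AUCRisk.mix_right hf _ _ _ hηN.1 h1ηN, AUCRisk.mix_right hf _ _ _ hπP.1 hπN.1]
  have hNP : AUCRisk f pN pP = 1 - AUCRisk f pP pN := by
    linarith [AUCRisk.add_swap_of_isProbabilityMeasure hf pP pN hN]
  rw [AUCRisk.self_eq_half hf pP hP, AUCRisk.self_eq_half hf pN hN, hNP]
  obtain rfl : πN = 1 - πP := by linarith
  ring

/-- consistency of the combined noisy semi-supervised risk:
`R_P̃ÑU(f) = γ·R(f; p_P̃, p_Ñ) + (1−γ)·(R(f; p_P̃, p_U) + R(f; p_U, p_Ñ) − 1/2)`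
equals `ã·R_PN(f) + (1 − ã)/2` with `ã = 1 − η_P − η_N`, independently of `γ`. -/
theorem combined_noisy_semi_supervised_auc_risk {X : Type*} [MeasurableSpace X]
    (pP pN : Measure X) [IsProbabilityMeasure pP] [IsProbabilityMeasure pN]
    (πP πN : ℝ) (hπP : πP ∈ Set.Icc (0 : ℝ) 1) (hπN : πN ∈ Set.Icc (0 : ℝ) 1)
    (hsum : πP + πN = 1)
    (ηP ηN : ℝ) (hηP : ηP ∈ Set.Icc (0 : ℝ) 1) (hηN : ηN ∈ Set.Icc (0 : ℝ) 1)
    (γ : ℝ) (hγ : γ ∈ Set.Icc (0 : ℝ) 1)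
    (f : X → ℝ) (hf : Measurable f)
    (hP : ∀ t : ℝ, pP {x | f x = t} = 0)
    (hN : ∀ t : ℝ, pN {x | f x = t} = 0)
    (pPt pNt pU : Measure X)
    (hpPt : pPt = ENNReal.ofReal (1 - ηP) • pP + ENNReal.ofReal ηP • pN)
    (hpNt : pNt = ENNReal.ofReal ηN • pP + ENNReal.ofReal (1 - ηN) • pN)
    (hpU : pU = ENNReal.ofReal πP • pP + ENNReal.ofReal πN • pN) :
    γ * AUCRisk f pPt pNt
      + (1 - γ) * (AUCRisk f pPt pU + AUCRisk f pU pNt - 1 / 2)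
      = (1 - ηP - ηN) * AUCRisk f pP pN + (1 - (1 - ηP - ηN)) / 2 :=
  combined_noisy_semi_supervised_auc_risk_general pP pN πP πN hπP hπN hsum ηP ηN hηP hηN γ f hf hP
    hN pPt pNt pU hpPt hpNt hpU
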